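/- (Expansion implies distance and energy barrier.) Let δ0 : F_2^{m_0} → F_2^{n} and δ1 : F_2^{n} → F_2^{m_2} be F_2-linear maps with δ1 ∘ δ0 = 0, and let α, β, γ > 0. Assume the complex is both an (α,β,γ)-small-set coboundary expander and an (α,β,γ)-small-set boundary expander. Then: (i) every c ∈ ker δ1 \ im δ0 and every c ∈ ker δ0ᵀ \ im δ1ᵀ has Hamming weight strictly greater than α·n, so the code distance d of the associated CSS code satisfies d ≥ α·n; (ii) for every sequence c_0 = 0, c_1, …, c_T in F_2^n with |c_t + c_{t+1}| = 1 for all t and c_T ∈ ker δ1 \ im δ0 there exists t with |δ1 c_t| ≥ β·⌊α·n⌋, and for every such sequence with c_T ∈ ker δ0ᵀ \ im δ1ᵀ there exists t with |δ0ᵀ c_t| ≥ β·⌊α·n⌋; hence the energy barrier satisfies E ≥ β·⌊α·n⌋. -/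
import Mathlib


/-- Hamming weight of a vector over `F_2`. -/
def wt {m : ℕ} (v : Fin m → ZMod 2) : ℕ :=
  (Finset.univ.filter (fun k => v k ≠ 0)).card


lemma wt_zero {m : ℕ} : wt (0 : Fin m → ZMod 2) = 0 := by
  simp [wt]

lemma wt_eq_zero {m : ℕ} {v : Fin m → ZMod 2} (h : wt v = 0) : v = 0 := by
  funext k
  by_contra hk
  have hmem : k ∈ Finset.univ.filter (fun k => v k ≠ 0) := by
    simp only [Finset.mem_filter, Finset.mem_univ, true_and]
    simpa using hk
  have hpos : 0 < (Finset.univ.filter (fun k => v k ≠ 0)).card :=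
    Finset.card_pos.mpr ⟨k, hmem⟩
  have h' : (Finset.univ.filter (fun k => v k ≠ 0)).card = 0 := h
  omega

lemma wt_add_le {m : ℕ} (a b : Fin m → ZMod 2) : wt (a + b) ≤ wt a + wt b := by
  classical
  have hsub : (Finset.univ.filter (fun k => (a + b) k ≠ 0)) ⊆
      (Finset.univ.filter (fun k => a k ≠ 0)) ∪ (Finset.univ.filter (fun k => b k ≠ 0)) := by
    intro k hk
    simp only [Finset.mem_filter, Finset.mem_union, Finset.mem_univ, true_and] at *
    by_contra hc
    push_neg at hc
    simp [Pi.add_apply, hc.1, hc.2] at hk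
  calc wt (a + b) ≤ _ := Finset.card_le_card hsub
    _ ≤ _ := Finset.card_union_le _ _

lemma pi_add_self {m : ℕ} (v : Fin m → ZMod 2) : v + v = 0 := by
  funext k
  exact CharTwo.add_self_eq_zero _

/-- Distance from `v` to the image of `M0.mulVec`. -/
noncomputable def distIm {a n : ℕ} (M0 : Matrix (Fin n) (Fin a) (ZMod 2))
    (v : Fin n → ZMod 2) : ℕ :=
  ((Finset.univ : Finset (Fin a → ZMod 2)).image (fun c0 => wt (v + M0.mulVec c0))).min'
    (Finset.Nonempty.image Finset.univ_nonempty _)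

lemma distIm_le {a n : ℕ} (M0 : Matrix (Fin n) (Fin a) (ZMod 2))
    (v : Fin n → ZMod 2) (c0 : Fin a → ZMod 2) :
    distIm M0 v ≤ wt (v + M0.mulVec c0) := by
  apply Finset.min'_le
  exact Finset.mem_image_of_mem _ (Finset.mem_univ _)

lemma distIm_exists {a n : ℕ} (M0 : Matrix (Fin n) (Fin a) (ZMod 2))
    (v : Fin n → ZMod 2) : ∃ c0, distIm M0 v = wt (v + M0.mulVec c0) := by
  have := Finset.min'_mem ((Finset.univ : Finset (Fin a → ZMod 2)).image
    (fun c0 => wt (v + M0.mulVec c0))) (Finset.Nonempty.image Finset.univ_nonempty _)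
  rw [Finset.mem_image] at this
  obtain ⟨c0, _, h⟩ := this
  exact ⟨c0, h.symm⟩

section Main

variable {a n b : ℕ} (M0 : Matrix (Fin n) (Fin a) (ZMod 2))
  (M1 : Matrix (Fin b) (Fin n) (ZMod 2))
  {α β : ℝ}

lemma dist_aux
    (hexp : ∀ c : Fin n → ZMod 2, (wt c : ℝ) ≤ α * n →
      ∃ c0 : Fin a → ZMod 2,
        β * (wt (c + M0.mulVec c0) : ℝ) ≤ (wt (M1.mulVec c) : ℝ))
    (hβ : 0 < β) :
    ∀ c : Fin n → ZMod 2, M1.mulVec c = 0 → c ∉ Set.range M0.mulVec →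
      α * n < (wt c : ℝ) := by
  intro c hker him
  by_contra h
  push_neg at h
  obtain ⟨c0, hc0⟩ := hexp c h
  rw [hker, wt_zero] at hc0
  simp only [Nat.cast_zero] at hc0
  have hw : (wt (c + M0.mulVec c0) : ℝ) = 0 := by
    nlinarith [Nat.cast_nonneg (α := ℝ) (wt (c + M0.mulVec c0))]
  have hw' : wt (c + M0.mulVec c0) = 0 := by exact_mod_cast hw
  have := wt_eq_zero hw'
  apply him
  refine ⟨c0, ?_⟩
  have : c + M0.mulVec c0 + M0.mulVec c0 = 0 + M0.mulVec c0 := by rw [this]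
  rw [add_assoc, pi_add_self, add_zero, zero_add] at this
  exact this.symm

lemma barrier_aux
    (hch : ∀ x, M1.mulVec (M0.mulVec x) = 0)
    (hexp : ∀ c : Fin n → ZMod 2, (wt c : ℝ) ≤ α * n →
      ∃ c0 : Fin a → ZMod 2,
        β * (wt (c + M0.mulVec c0) : ℝ) ≤ (wt (M1.mulVec c) : ℝ))
    (hα : 0 < α) (hβ : 0 < β) :
    ∀ (T : ℕ) (c : ℕ → Fin n → ZMod 2), c 0 = 0 →
      (∀ t < T, wt (c t + c (t + 1)) = 1) →
      M1.mulVec (c T) = 0 → c T ∉ Set.range M0.mulVec →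
      ∃ t ≤ T, β * (⌊α * n⌋₊ : ℝ) ≤ (wt (M1.mulVec (c t)) : ℝ) := by
  intro T c hc0 hstep hker him
  set F := ⌊α * n⌋₊ with hF
  rcases Nat.eq_zero_or_pos F with hF0 | hFpos
  · refine ⟨0, Nat.zero_le _, ?_⟩
    rw [hF0]
    simp
  -- distIm at start is 0
  have hW0 : distIm M0 (c 0) = 0 := by
    have := distIm_le M0 (c 0) 0
    simpa [hc0, wt_zero] using this
  -- distIm at end is > F
  have hαn : (0:ℝ) ≤ α * n := by positivity
  have hWT : F < distIm M0 (c T) := by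
    by_contra hle
    push_neg at hle
    obtain ⟨c0, hc0eq⟩ := distIm_exists M0 (c T)
    set v := c T + M0.mulVec c0 with hv
    have hvwt : (wt v : ℝ) ≤ α * n := by
      have h1 : wt v ≤ F := hc0eq ▸ hle
      calc (wt v : ℝ) ≤ (F : ℝ) := by exact_mod_cast h1
        _ ≤ α * n := Nat.floor_le hαn
    have hvker : M1.mulVec v = 0 := by
      rw [hv, Matrix.mulVec_add, hker, hch, add_zero]
    have hvim : v ∉ Set.range M0.mulVec := by
      rintro ⟨c0', hc0'⟩
      apply him
      refine ⟨c0' + c0, ?_⟩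
      rw [Matrix.mulVec_add, hc0', hv, add_assoc, pi_add_self, add_zero]
    have := dist_aux M0 M1 hexp hβ v hvker hvim
    linarith
  -- step bounds on distIm
  have hstepW : ∀ t < T, distIm M0 (c (t+1)) ≤ distIm M0 (c t) + 1 := by
    intro t ht
    obtain ⟨c0, hc0eq⟩ := distIm_exists M0 (c t)
    have hct1 : c (t+1) = c t + (c t + c (t+1)) := by
      rw [← add_assoc, pi_add_self, zero_add]
    calc distIm M0 (c (t+1)) ≤ wt (c (t+1) + M0.mulVec c0) := distIm_le _ _ _
      _ = wt ((c t + M0.mulVec c0) + (c t + c (t+1))) := by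
          congr 1
          funext k
          have h2 : ∀ x y z : ZMod 2, y + z = x + z + (x + y) := by decide
          simpa using h2 (c t k) (c (t+1) k) (M0.mulVec c0 k)
      _ ≤ wt (c t + M0.mulVec c0) + wt (c t + c (t+1)) := wt_add_le _ _
      _ = distIm M0 (c t) + 1 := by rw [← hc0eq, hstep t ht]
  -- find the first t with distIm ≥ F
  classical
  have hex : ∃ t, t ≤ T ∧ F ≤ distIm M0 (c t) := ⟨T, le_refl _, le_of_lt hWT⟩
  obtain ⟨htT, htF⟩ := Nat.find_spec hex
  set t := Nat.find hex with htdef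
  have ht0 : t ≠ 0 := by
    intro h
    rw [h, hW0] at htF
    omega
  have htpred : ¬ (t - 1 ≤ T ∧ F ≤ distIm M0 (c (t - 1))) :=
    Nat.find_min hex (by omega)
  have hpredT : t - 1 ≤ T := le_trans (Nat.sub_le _ _) htT
  have hpredlt : distIm M0 (c (t - 1)) < F := by
    by_contra hcon
    push_neg at hcon
    exact htpred ⟨hpredT, hcon⟩
  have hpredT' : t - 1 < T := lt_of_lt_of_le (by omega) htT
  have hstepF : distIm M0 (c t) ≤ F := by
    have := hstepW (t - 1) hpredT'
    have ht1 : t - 1 + 1 = t := by omega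
    rw [ht1] at this
    omega
  have htFeq : distIm M0 (c t) = F := le_antisymm hstepF htF
  refine ⟨t, htT, ?_⟩
  obtain ⟨c0, hc0eq⟩ := distIm_exists M0 (c t)
  set v := c t + M0.mulVec c0 with hv
  have hvwt : (wt v : ℝ) ≤ α * n := by
    have : wt v = F := by rw [← hc0eq, htFeq]
    rw [this]
    exact Nat.floor_le (by positivity)
  obtain ⟨c0', hc0'⟩ := hexp v hvwt
  have hlow : (F : ℝ) ≤ (wt (v + M0.mulVec c0') : ℝ) := by
    have : distIm M0 (c t) ≤ wt (v + M0.mulVec c0') := by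
      have heq : v + M0.mulVec c0' = c t + M0.mulVec (c0 + c0') := by
        rw [hv, Matrix.mulVec_add, add_assoc]
      rw [heq]
      exact distIm_le _ _ _
    rw [htFeq] at this
    exact_mod_cast this
  have hMv : M1.mulVec v = M1.mulVec (c t) := by
    rw [hv, Matrix.mulVec_add, hch, add_zero]
  rw [hMv] at hc0'
  calc β * (F : ℝ) ≤ β * (wt (v + M0.mulVec c0') : ℝ) := by
        exact mul_le_mul_of_nonneg_left hlow (le_of_lt hβ)
    _ ≤ _ := hc0'

end Main

/-- Expansion implies distance and energy barrier. Let
`δ0 = D0.mulVec : F_2^{m₀} → F_2^n` and `δ1 = D1.mulVec : F_2^n → F_2^{m₂}` with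
`D1 * D0 = 0`, and suppose the complex is both an `(α,β,γ)`-small-set coboundary
expander and an `(α,β,γ)`-small-set boundary expander. Then (i) every X- or Z-logical
operator has weight `> α·n` (so `d ≥ α·n`), and (ii) every unit-step walk from `0` to a
logical operator passes through a state with at least `β·⌊α·n⌋` violated checks
(so `E ≥ β·⌊α·n⌋`). -/
theorem expansion_implies_distance_and_energy_barrier
    (m₀ n m₂ : ℕ)
    (D0 : Matrix (Fin n) (Fin m₀) (ZMod 2))
    (D1 : Matrix (Fin m₂) (Fin n) (ZMod 2))
    (hchain : D1 * D0 = 0)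
    (α β γ : ℝ) (hα : 0 < α) (hβ : 0 < β) (hγ : 0 < γ)
    (hco : ∀ c : Fin n → ZMod 2, (wt c : ℝ) ≤ α * n →
      ∃ c0 : Fin m₀ → ZMod 2,
        β * (wt (c + D0.mulVec c0) : ℝ) ≤ (wt (D1.mulVec c) : ℝ) ∧
        γ * (wt c0 : ℝ) ≤ (wt c : ℝ))
    (hbd : ∀ c : Fin n → ZMod 2, (wt c : ℝ) ≤ α * n →
      ∃ c2 : Fin m₂ → ZMod 2,
        β * (wt (c + D1.transpose.mulVec c2) : ℝ) ≤ (wt (D0.transpose.mulVec c) : ℝ) ∧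
        γ * (wt c2 : ℝ) ≤ (wt c : ℝ)) :
    ((∀ c : Fin n → ZMod 2, D1.mulVec c = 0 → c ∉ Set.range D0.mulVec →
        α * n < (wt c : ℝ)) ∧
     (∀ c : Fin n → ZMod 2, D0.transpose.mulVec c = 0 →
        c ∉ Set.range D1.transpose.mulVec → α * n < (wt c : ℝ))) ∧
    ((∀ (T : ℕ) (c : ℕ → Fin n → ZMod 2), c 0 = 0 →
        (∀ t < T, wt (c t + c (t + 1)) = 1) →
        D1.mulVec (c T) = 0 → c T ∉ Set.range D0.mulVec →
        ∃ t ≤ T, β * (⌊α * n⌋₊ : ℝ) ≤ (wt (D1.mulVec (c t)) : ℝ)) ∧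
     (∀ (T : ℕ) (c : ℕ → Fin n → ZMod 2), c 0 = 0 →
        (∀ t < T, wt (c t + c (t + 1)) = 1) →
        D0.transpose.mulVec (c T) = 0 → c T ∉ Set.range D1.transpose.mulVec →
        ∃ t ≤ T, β * (⌊α * n⌋₊ : ℝ) ≤ (wt (D0.transpose.mulVec (c t)) : ℝ))) := by
  have hexp1 : ∀ c : Fin n → ZMod 2, (wt c : ℝ) ≤ α * n →
      ∃ c0 : Fin m₀ → ZMod 2,
        β * (wt (c + D0.mulVec c0) : ℝ) ≤ (wt (D1.mulVec c) : ℝ) :=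
    fun c h => (hco c h).imp (fun _ hc => hc.1)
  have hexp2 : ∀ c : Fin n → ZMod 2, (wt c : ℝ) ≤ α * n →
      ∃ c2 : Fin m₂ → ZMod 2,
        β * (wt (c + D1.transpose.mulVec c2) : ℝ) ≤ (wt (D0.transpose.mulVec c) : ℝ) :=
    fun c h => (hbd c h).imp (fun _ hc => hc.1)
  have hch1 : ∀ x, D1.mulVec (D0.mulVec x) = 0 := by
    intro x
    rw [Matrix.mulVec_mulVec, hchain, Matrix.zero_mulVec]
  have hch2 : ∀ x, D0.transpose.mulVec (D1.transpose.mulVec x) = 0 := by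
    intro x
    rw [Matrix.mulVec_mulVec, ← Matrix.transpose_mul, hchain, Matrix.transpose_zero,
      Matrix.zero_mulVec]
  exact ⟨⟨dist_aux D0 D1 hexp1 hβ, dist_aux D1.transpose D0.transpose hexp2 hβ⟩,
    barrier_aux D0 D1 hch1 hexp1 hα hβ, barrier_aux D1.transpose D0.transpose hch2 hexp2 hα hβ⟩
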